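/- Let A ∈ GL(2,ℂ) with |det A| = 1. By polar decomposition there exist unit vectors u_A⁺ ⊥ u_A⁻ and v_A⁺ ⊥ v_A⁻ with A u_A⁺ = ‖A‖ v_A⁺ and A u_A⁻ = ‖A‖⁻¹ v_A⁻. Then for any A, B with |det A| = |det B| = 1 one has |B u_{AB}⁻ ∧ u_A⁻| ≤ ‖A‖⁻² ‖B‖, where u ∧ v denotes the 2×2 determinant of (u, v). -/

import Mathlib

/-- The wedge (2×2 determinant) of two vectors in ℂ². -/
noncomputable def wedge (u v : Fin 2 → ℂ) : ℂ := u 0 * v 1 - u 1 * v 0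

/-- Operator norm of a 2×2 complex matrix w.r.t. the Euclidean norm on ℂ². -/
noncomputable def opNorm (A : Matrix (Fin 2) (Fin 2) ℂ) : ℝ :=
  ‖Matrix.toEuclideanCLM (𝕜 := ℂ) A‖

/-- `IsSVD A u⁺ u⁻ v⁺ v⁻` records the data coming from the polar (singular value)
decomposition of a matrix `A` with `|det A| = 1`:  orthonormal pairs `u⁺ ⊥ u⁻`,
`v⁺ ⊥ v⁻` of unit vectors with `A u⁺ = ‖A‖ v⁺` and `A u⁻ = ‖A‖⁻¹ v⁻`. -/
def IsSVD (A : Matrix (Fin 2) (Fin 2) ℂ)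
    (up um vp vm : EuclideanSpace ℂ (Fin 2)) : Prop :=
  ‖up‖ = 1 ∧ ‖um‖ = 1 ∧ ‖vp‖ = 1 ∧ ‖vm‖ = 1 ∧
    inner (𝕜 := ℂ) up um = (0 : ℂ) ∧ inner (𝕜 := ℂ) vp vm = (0 : ℂ) ∧
    A.mulVec up = (opNorm A : ℂ) • (vp : Fin 2 → ℂ) ∧
    A.mulVec um = ((opNorm A)⁻¹ : ℂ) • (vm : Fin 2 → ℂ)

/-
Applying `A` to the wedge gives `det A · (B u_{AB}⁻ ∧ u_A⁻) = (A B u_{AB}⁻) ∧ (A u_A⁻)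
= ‖AB‖⁻¹ ‖A‖⁻¹ (v_{AB}⁻ ∧ v_A⁻)`, and the wedge of two unit vectors has modulus at most one,
being the inner product of the first with its conjugate rotated by a right angle. It remains to
see `‖A‖ ≤ ‖AB‖ ‖B‖`, i.e. `‖B⁻¹‖ ≤ ‖B‖` when `|det B| = 1`: pairing `z` with its rotated
conjugate `z'` gives `‖z‖² = |Bz ∧ Bz'| ≤ ‖Bz‖ ‖B‖ ‖z‖`.
-/

open Matrix WithLp ComplexConjugate

lemma wedge_mulVec_mulVec (M : Matrix (Fin 2) (Fin 2) ℂ) (u v : Fin 2 → ℂ) :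
    wedge (M *ᵥ u) (M *ᵥ v) = M.det * wedge u v := by
  simp only [wedge, mulVec, dotProduct, det_fin_two, Fin.sum_univ_two]
  ring

noncomputable def wedgeDual (u : EuclideanSpace ℂ (Fin 2)) : EuclideanSpace ℂ (Fin 2) :=
  !₂[-conj (u 1), conj (u 0)]

lemma inner_wedgeDual (u v : EuclideanSpace ℂ (Fin 2)) :
    inner ℂ (wedgeDual u) v = wedge u v := by
  simp only [wedgeDual, wedge, PiLp.inner_apply, RCLike.inner_apply, Fin.sum_univ_two,
    cons_val_zero, cons_val_one, cons_val_fin_one, map_neg, RCLike.conj_conj]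
  ring

lemma norm_wedgeDual (u : EuclideanSpace ℂ (Fin 2)) : ‖wedgeDual u‖ = ‖u‖ := by
  rw [← sq_eq_sq₀ (norm_nonneg _) (norm_nonneg _), EuclideanSpace.norm_sq_eq,
    EuclideanSpace.norm_sq_eq]
  simp only [wedgeDual, Fin.sum_univ_two, cons_val_zero, cons_val_one, cons_val_fin_one,
    norm_neg, RCLike.norm_conj]
  ring

lemma wedge_wedgeDual_self (u : EuclideanSpace ℂ (Fin 2)) :
    wedge u (wedgeDual u) = (‖u‖ ^ 2 : ℝ) := by
  rw [EuclideanSpace.norm_sq_eq]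
  simp [wedge, wedgeDual, Fin.sum_univ_two, Complex.mul_conj, Complex.normSq_eq_norm_sq]

lemma norm_wedge_le (u v : EuclideanSpace ℂ (Fin 2)) : ‖wedge u v‖ ≤ ‖u‖ * ‖v‖ := by
  rw [← inner_wedgeDual, ← norm_wedgeDual u]
  exact norm_inner_le_norm _ _

lemma opNorm_nonneg (M : Matrix (Fin 2) (Fin 2) ℂ) : 0 ≤ opNorm M := norm_nonneg _

lemma norm_toEuclideanCLM_le (M : Matrix (Fin 2) (Fin 2) ℂ) (x : EuclideanSpace ℂ (Fin 2)) :
    ‖toEuclideanCLM (𝕜 := ℂ) M x‖ ≤ opNorm M * ‖x‖ :=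
  (toEuclideanCLM (𝕜 := ℂ) M).le_opNorm x

lemma opNorm_pos_of_det_ne_zero {M : Matrix (Fin 2) (Fin 2) ℂ} (h : M.det ≠ 0) :
    0 < opNorm M :=
  norm_pos_iff.2 fun h0 => h <| by
    rw [(map_eq_zero_iff _ toEuclideanCLM.injective).1 h0, det_zero]

lemma norm_toEuclideanCLM_of_mulVec_eq_smul {M : Matrix (Fin 2) (Fin 2) ℂ}
    {x v : EuclideanSpace ℂ (Fin 2)} {c : ℂ} (h : M *ᵥ x = c • ofLp v) (hv : ‖v‖ = 1) :
    ‖toEuclideanCLM (𝕜 := ℂ) M x‖ = ‖c‖ := by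
  rw [← toLp_ofLp 2 x, toEuclideanCLM_toLp, h, toLp_smul, toLp_ofLp, norm_smul, hv, mul_one]

lemma norm_det_mul_norm_wedge_le (M : Matrix (Fin 2) (Fin 2) ℂ) (u v : EuclideanSpace ℂ (Fin 2)) :
    ‖M.det‖ * ‖wedge u v‖ ≤ ‖toEuclideanCLM (𝕜 := ℂ) M u‖ * ‖toEuclideanCLM (𝕜 := ℂ) M v‖ := by
  rw [← norm_mul, ← wedge_mulVec_mulVec, ← ofLp_toEuclideanCLM, ← ofLp_toEuclideanCLM]
  exact norm_wedge_le _ _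

lemma norm_det_mul_norm_le (M : Matrix (Fin 2) (Fin 2) ℂ) (z : EuclideanSpace ℂ (Fin 2)) :
    ‖M.det‖ * ‖z‖ ≤ opNorm M * ‖toEuclideanCLM (𝕜 := ℂ) M z‖ := by
  set T := toEuclideanCLM (𝕜 := ℂ) M
  rcases (norm_nonneg z).eq_or_lt with hz | hz
  · rw [← hz, mul_zero]
    exact mul_nonneg (opNorm_nonneg M) (norm_nonneg _)
  have h : ‖M.det‖ * ‖z‖ * ‖z‖ ≤ opNorm M * ‖T z‖ * ‖z‖ := by
    calc ‖M.det‖ * ‖z‖ * ‖z‖ = ‖M.det‖ * ‖wedge z (wedgeDual z)‖ := by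
          rw [wedge_wedgeDual_self, Complex.norm_real, Real.norm_of_nonneg (by positivity)]
          ring
      _ ≤ ‖T z‖ * ‖T (wedgeDual z)‖ := norm_det_mul_norm_wedge_le M z (wedgeDual z)
      _ ≤ ‖T z‖ * (opNorm M * ‖z‖) := by
          gcongr
          simpa only [norm_wedgeDual] using norm_toEuclideanCLM_le M (wedgeDual z)
      _ = opNorm M * ‖T z‖ * ‖z‖ := by ring
  exact le_of_mul_le_mul_right h hz

lemma norm_det_mul_opNorm_le (A B : Matrix (Fin 2) (Fin 2) ℂ) :
    ‖B.det‖ * opNorm A ≤ opNorm (A * B) * opNorm B := by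
  by_cases hB : B.det = 0
  · rw [hB, norm_zero, zero_mul]
    exact mul_nonneg (opNorm_nonneg _) (opNorm_nonneg _)
  have hd : 0 < ‖B.det‖ := norm_pos_iff.2 hB
  rw [← le_div_iff₀' hd]
  refine ContinuousLinearMap.opNorm_le_bound _
    (div_nonneg (mul_nonneg (opNorm_nonneg _) (opNorm_nonneg _)) hd.le) fun x => ?_
  obtain ⟨y, rfl⟩ : ∃ y, toEuclideanCLM (𝕜 := ℂ) B y = x := by
    refine ⟨toEuclideanCLM (𝕜 := ℂ) B⁻¹ x, ?_⟩
    rw [← mul_apply_eq_comp, ← map_mul, mul_nonsing_inv _ (isUnit_iff_ne_zero.2 hB),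
      map_one, one_apply_eq_self]
  rw [← mul_apply_eq_comp, ← map_mul, div_mul_eq_mul_div, le_div_iff₀ hd, mul_assoc]
  calc ‖toEuclideanCLM (𝕜 := ℂ) (A * B) y‖ * ‖B.det‖ ≤ opNorm (A * B) * ‖y‖ * ‖B.det‖ := by
        gcongr
        exact norm_toEuclideanCLM_le _ _
    _ = opNorm (A * B) * (‖B.det‖ * ‖y‖) := by ring
    _ ≤ opNorm (A * B) * (opNorm B * ‖toEuclideanCLM (𝕜 := ℂ) B y‖) :=
        mul_le_mul_of_nonneg_left (norm_det_mul_norm_le B y) (opNorm_nonneg _)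

theorem stmt6 (A B : Matrix (Fin 2) (Fin 2) ℂ)
    (hA : ‖A.det‖ = 1) (hB : ‖B.det‖ = 1)
    (uAp uAm vAp vAm uABp uABm vABp vABm : EuclideanSpace ℂ (Fin 2))
    (hSVDA : IsSVD A uAp uAm vAp vAm)
    (hSVDAB : IsSVD (A * B) uABp uABm vABp vABm) :
    ‖wedge (B.mulVec uABm) uAm‖ ≤ (opNorm A)⁻¹ ^ 2 * opNorm B := by
  obtain ⟨-, -, -, hvAm, -, -, -, hAuAm⟩ := hSVDA
  obtain ⟨-, -, -, hvABm, -, -, -, hABuABm⟩ := hSVDAB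
  have hs : 0 < opNorm A := opNorm_pos_of_det_ne_zero <| ne_zero_of_norm_ne_zero <| by
    simp [hA]
  have hr : 0 < opNorm (A * B) := opNorm_pos_of_det_ne_zero <| ne_zero_of_norm_ne_zero <| by
    simp [hA, hB]
  have hwedge : ‖wedge (B *ᵥ uABm) uAm‖ ≤ (opNorm (A * B))⁻¹ * (opNorm A)⁻¹ := by
    have hAB : A *ᵥ ofLp (toLp 2 (B *ᵥ uABm)) = ((opNorm (A * B))⁻¹ : ℂ) • ofLp vABm := by
      rw [ofLp_toLp, mulVec_mulVec, hABuABm]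
    have := norm_det_mul_norm_wedge_le A (toLp 2 (B *ᵥ uABm)) uAm
    rwa [hA, one_mul, norm_toEuclideanCLM_of_mulVec_eq_smul hAB hvABm,
      norm_toEuclideanCLM_of_mulVec_eq_smul hAuAm hvAm, norm_inv, norm_inv,
      Complex.norm_of_nonneg hr.le, Complex.norm_of_nonneg hs.le] at this
  have hsrt : opNorm A ≤ opNorm (A * B) * opNorm B := by
    simpa [hB] using norm_det_mul_opNorm_le A B
  refine hwedge.trans ?_
  rw [inv_mul_le_iff₀ hr]
  calc (opNorm A)⁻¹ = opNorm A * (opNorm A)⁻¹ ^ 2 := by field_simp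
    _ ≤ opNorm (A * B) * opNorm B * (opNorm A)⁻¹ ^ 2 := by gcongr
    _ = _ := by ring
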